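/- arXiv:2207.08645 — 6 statements merged into one kernel-verified Lean document; each statement's English description precedes it below -/
import Mathlib

section
/- A reward function r is feasible for the IRL problem (M, π^E) (i.e., π^E is an optimal policy in M ∪ r) if and only if there exist nonnegative functions A_h : S × A → ℝ_{≥0} and functions V_h : S → ℝ (for h ∈ [H], with V_{H} interpreted appropriately at the terminal step) such that for all s, a, h: r_h(s,a) = −A_h(s,a)·1[π^E_h(a|s) = 0] + V_h(s) − Σ_{s'} P(s'|s,a) V_{h+1}(s'). -/
/-!
The decomposition says exactly that the action value `Q_h(s,a) = r_h(s,a) + ∑_{s'} P(s'|s,a) V_{h+1}(s')`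
equals `V_h(s) - A_h(s,a)·1[πE_h(a|s) = 0]`, and optimality of `πE` is this identity pointwise with a
nonnegative gap `A`. Averaging it over `πE_h(·|s)` gives back `V_h(s)`, because `πE` puts no mass where
the indicator is `1`; so the potential `V` of the decomposition is the value function of `πE` itself.
-/

open Finset

theorem optimal_action_iff_exists_gap {π q v : ℝ} (hπ : 0 ≤ π) :
    ((0 < π → q = v) ∧ (π = 0 → q ≤ v)) ↔
      ∃ g, 0 ≤ g ∧ q = v - g * (if π = 0 then 1 else 0) := by
  constructor
  · rintro ⟨hpos, hzero⟩
    rcases hπ.eq_or_lt with hπ0 | hπpos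
    · exact ⟨v - q, by linarith [hzero hπ0.symm], by simp [← hπ0]⟩
    · exact ⟨0, le_rfl, by simp [hpos hπpos]⟩
  · rintro ⟨g, hg, rfl⟩
    exact ⟨fun hπpos => by simp [hπpos.ne'], fun hπ0 => by simpa [hπ0] using hg⟩

theorem sum_mul_sub_mul_ite_zero_eq {ι : Type*} [Fintype ι] {π g : ι → ℝ} (v : ℝ)
    (hπ : ∑ i, π i = 1) :
    ∑ i, π i * (v - g i * (if π i = 0 then 1 else 0)) = v := by
  have hterm : ∀ i, π i * (v - g i * (if π i = 0 then 1 else 0)) = π i * v := by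
    intro i
    by_cases hi : π i = 0 <;> simp [hi]
  simp only [hterm, ← sum_mul, hπ, one_mul]

theorem stmt4_general {S A : Type*} [Fintype S] [Fintype A]
    (H : ℕ) (P : S → A → S → ℝ)
    (r : ℕ → S → A → ℝ)
    (πE : ℕ → S → A → ℝ)
    (hπnn : ∀ h s a, 0 ≤ πE h s a) (hπsum : ∀ h s, ∑ a : A, πE h s a = 1) :
    -- `πE` is optimal in `M ∪ r`:
    ((∃ (Q : ℕ → S → A → ℝ) (V : ℕ → S → ℝ),
        (∀ s a, Q H s a = 0) ∧
        (∀ h s, V h s = ∑ a : A, πE h s a * Q h s a) ∧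
        (∀ h, h < H → ∀ s a, Q h s a = r h s a + ∑ s' : S, P s a s' * V (h+1) s') ∧
        (∀ h, h < H → ∀ s a,
          (0 < πE h s a → Q h s a = V h s) ∧
          (πE h s a = 0 → Q h s a ≤ V h s)))
      ↔
      (∃ (Af : ℕ → S → A → ℝ) (Vf : ℕ → S → ℝ),
        (∀ h s a, 0 ≤ Af h s a) ∧
        (∀ s, Vf H s = 0) ∧
        (∀ h, h < H → ∀ s a,
          r h s a = -(Af h s a) * (if πE h s a = 0 then 1 else 0) + Vf h s
            - ∑ s' : S, P s a s' * Vf (h+1) s'))) := by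
  constructor
  · rintro ⟨Q, V, hQH, hV, hBellman, hOpt⟩
    have hgap : ∀ h s a, ∃ g, 0 ≤ g ∧
        (h < H → Q h s a = V h s - g * (if πE h s a = 0 then 1 else 0)) := by
      intro h s a
      by_cases hh : h < H
      · obtain ⟨g, hg, hQ⟩ := (optimal_action_iff_exists_gap (hπnn h s a)).1 (hOpt h hh s a)
        exact ⟨g, hg, fun _ => hQ⟩
      · exact ⟨0, le_rfl, fun hh' => absurd hh' hh⟩
    choose Af hAf hQ using hgap
    refine ⟨Af, V, hAf, fun s => by simp [hV, hQH], fun h hh s a => ?_⟩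
    linarith [hBellman h hh s a, hQ h s a hh]
  · rintro ⟨Af, Vf, hAf, hVfH, hr⟩
    -- the gap is switched off from the horizon on, so that `Q_H = V_H - 0 = 0`
    let g : ℕ → S → A → ℝ := fun h s a => if h < H then Af h s a else 0
    refine ⟨fun h s a => Vf h s - g h s a * (if πE h s a = 0 then 1 else 0), Vf,
      fun s a => by simp [g, hVfH], fun h s => (sum_mul_sub_mul_ite_zero_eq _ (hπsum h s)).symm,
      fun h hh s a => ?_, fun h hh s a => ?_⟩
    · simp only [g, if_pos hh, hr h hh s a]
      ring
    · exact (optimal_action_iff_exists_gap (hπnn h s a)).2 ⟨Af h s a, hAf h s a, by simp [g, hh]⟩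

/-- Feasible reward set, explicit form; cf. Lemma 4.3 of the paper.
A reward `r` is feasible for the IRL problem `(M, πE)` (i.e. `πE` is optimal in `M ∪ r`)
iff there exist nonnegative `A_h` and `V_h` (with `V_H = 0` at the terminal step) such
that `r_h(s,a) = −A_h(s,a)·1[πE_h(a|s)=0] + V_h(s) − ∑_{s'} P(s'|s,a) V_{h+1}(s')`. -/
theorem stmt4 {S A : Type*} [Fintype S] [Fintype A] [DecidableEq S] [DecidableEq A]
    (H : ℕ) (P : S → A → S → ℝ)
    (hPnn : ∀ s a s', 0 ≤ P s a s')
    (hPsum : ∀ s a, ∑ s' : S, P s a s' = 1)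
    (r : ℕ → S → A → ℝ)
    (πE : ℕ → S → A → ℝ)
    (hπnn : ∀ h s a, 0 ≤ πE h s a) (hπsum : ∀ h s, ∑ a : A, πE h s a = 1) :
    -- `πE` is optimal in `M ∪ r`:
    ((∃ (Q : ℕ → S → A → ℝ) (V : ℕ → S → ℝ),
        (∀ s a, Q H s a = 0) ∧
        (∀ h s, V h s = ∑ a : A, πE h s a * Q h s a) ∧
        (∀ h, h < H → ∀ s a, Q h s a = r h s a + ∑ s' : S, P s a s' * V (h+1) s') ∧
        (∀ h, h < H → ∀ s a,
          (0 < πE h s a → Q h s a = V h s) ∧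
          (πE h s a = 0 → Q h s a ≤ V h s)))
      ↔
      (∃ (Af : ℕ → S → A → ℝ) (Vf : ℕ → S → ℝ),
        (∀ h s a, 0 ≤ Af h s a) ∧
        (∀ s, Vf H s = 0) ∧
        (∀ h, h < H → ∀ s a,
          r h s a = -(Af h s a) * (if πE h s a = 0 then 1 else 0) + Vf h s
            - ∑ s' : S, P s a s' * Vf (h+1) s'))) :=
  stmt4_general H P r πE hπnn hπsum
end

section
/- Let M₁, M₂ be two finite-horizon MDPs without reward with transition models P₁, P₂, r a reward function, and π₁*, π₂* optimal policies in M₁∪r and M₂∪r respectively. Then for all s and h: V*_{M₁∪r,h}(s) − V*_{M₂∪r,h}(s) ≤ Σ_{h'=h}^{H} Σ_{s',a',s''} ρ^{π₁*}_{M₂,h,h'}(s'|s) · π₁*_{h'}(a'|s') · (P₁(s''|s',a') − P₂(s''|s',a')) · V*_{M₁∪r,h'+1}(s''), where V* denotes the optimal value function. -/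
/-!
Let `W` be the value of `π₁*` in `M₂ ∪ r`. Optimality of `V₂` gives `W ≤ V₂`, so it suffices to
show that `V₁ - W` equals the right-hand side (the simulation lemma). Weighting `V₁ - W` at time
`h'` by the visitation probabilities `ρ_{h,h'}` of `π₁*` in `M₂` gives a quantity `D h'`; the two
Bellman equations show that `D h' - D (h' + 1)` is exactly the `h'`-th summand, and the sum
telescopes from `D h = V₁ h s - W h s` down to `D (H + 1) = 0`.
-/

open Finset

namespace FiniteHorizonMDP

variable {S A : Type*} [Fintype S] [Fintype A]

noncomputable def policyValue (H : ℕ) (P : S → A → S → ℝ) (r : ℕ → S → A → ℝ)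
    (π : ℕ → S → A → ℝ) : ℕ → S → ℝ
  | h => fun s =>
      if h < H then ∑ a, π h s a * (r h s a + ∑ s', P s a s' * policyValue H P r π (h + 1) s')
      else 0
  termination_by h => H - h

theorem policyValue_of_le (H : ℕ) (P : S → A → S → ℝ) (r : ℕ → S → A → ℝ)
    (π : ℕ → S → A → ℝ) (h : ℕ) (hh : H ≤ h) (s : S) : policyValue H P r π h s = 0 := by
  rw [policyValue]
  exact if_neg (Nat.not_lt.mpr hh)

theorem policyValue_of_lt (H : ℕ) (P : S → A → S → ℝ) (r : ℕ → S → A → ℝ)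
    (π : ℕ → S → A → ℝ) (h : ℕ) (hh : h < H) (s : S) :
    policyValue H P r π h s =
      ∑ a, π h s a * (r h s a + ∑ s', P s a s' * policyValue H P r π (h + 1) s') := by
  rw [policyValue]
  exact if_pos hh

theorem bellman_sub_bellman (p c : A → ℝ) (P1 P2 : A → S → ℝ) (v w : S → ℝ) :
    ∑ a, p a * (c a + ∑ s', P1 a s' * v s') - ∑ a, p a * (c a + ∑ s', P2 a s' * w s') =
      ∑ a, ∑ s', p a * (P1 a s' - P2 a s') * v s' +
        ∑ a, ∑ s', p a * P2 a s' * (v s' - w s') := by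
  simp only [← sum_sub_distrib, ← sum_add_distrib, mul_add, mul_sum]
  refine sum_congr rfl fun a _ => ?_
  rw [add_sub_add_left_eq_sub, ← sum_sub_distrib]
  exact sum_congr rfl fun s' _ => by ring

theorem sum_mul_step_eq (P : S → A → S → ℝ) (π : S → A → ℝ) (μ μ' : S → ℝ)
    (hμ' : ∀ t, μ' t = ∑ u, ∑ a, P u a t * π u a * μ u) (f : S → ℝ) :
    ∑ u, μ u * ∑ a, ∑ t, π u a * P u a t * f t = ∑ t, μ' t * f t := by
  simp only [hμ', sum_mul, mul_sum]
  conv_rhs => rw [sum_comm]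
  refine sum_congr rfl fun u _ => ?_
  rw [sum_comm]
  exact sum_congr rfl fun a _ => sum_congr rfl fun t _ => by ring

theorem value_sub_value_eq_sum_visitation [DecidableEq S] {H : ℕ} {P1 P2 : S → A → S → ℝ}
    {r : ℕ → S → A → ℝ} {π : ℕ → S → A → ℝ} {V W : ℕ → S → ℝ} {ρ : ℕ → ℕ → S → S → ℝ}
    (hV0 : ∀ h, H ≤ h → ∀ s, V h s = 0)
    (hV : ∀ h, h < H → ∀ s, V h s = ∑ a, π h s a * (r h s a + ∑ s', P1 s a s' * V (h + 1) s'))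
    (hW0 : ∀ h, H ≤ h → ∀ s, W h s = 0)
    (hW : ∀ h, h < H → ∀ s, W h s = ∑ a, π h s a * (r h s a + ∑ s', P2 s a s' * W (h + 1) s'))
    (hρ0 : ∀ h s s', ρ h h s s' = if s' = s then 1 else 0)
    (hρ : ∀ h h' s s', ρ h (h' + 1) s s' = ∑ s'', ∑ a, P2 s'' a s' * π h' s'' a * ρ h h' s s'')
    (h : ℕ) (hh : h ≤ H) (s : S) :
    V h s - W h s =
      ∑ h' ∈ Icc h H, ∑ s', ∑ a', ∑ s'',
        ρ h h' s s' * π h' s' a' * (P1 s' a' s'' - P2 s' a' s'') * V (h' + 1) s'' := by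
  set D : ℕ → ℝ := fun h' => ∑ s', ρ h h' s s' * (V h' s' - W h' s') with hD
  have hD_start : D h = V h s - W h s := by simp [hD, hρ0]
  have hD_end : D (H + 1) = 0 := by simp [hD, hV0 (H + 1) H.le_succ, hW0 (H + 1) H.le_succ]
  have hD_step : ∀ h', D h' - D (h' + 1) = ∑ s', ∑ a', ∑ s'',
      ρ h h' s s' * π h' s' a' * (P1 s' a' s'' - P2 s' a' s'') * V (h' + 1) s'' := by
    intro h'
    rcases lt_or_ge h' H with hlt | hge
    · have hdiff : ∀ s', V h' s' - W h' s' =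
          ∑ a, ∑ s'', π h' s' a * (P1 s' a s'' - P2 s' a s'') * V (h' + 1) s'' +
            ∑ a, ∑ s'', π h' s' a * P2 s' a s'' * (V (h' + 1) s'' - W (h' + 1) s'') := by
        intro s'
        rw [hV h' hlt, hW h' hlt]
        exact bellman_sub_bellman _ _ _ _ _ _
      have hnext : ∑ s', ρ h h' s s' *
          ∑ a, ∑ s'', π h' s' a * P2 s' a s'' * (V (h' + 1) s'' - W (h' + 1) s'') = D (h' + 1) :=
        sum_mul_step_eq P2 (π h') _ _ (hρ h h' s) _
      rw [← hnext]
      simp only [hD, hdiff, mul_add, sum_add_distrib, add_sub_cancel_right, mul_sum]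
      exact sum_congr rfl fun s' _ => sum_congr rfl fun a _ => sum_congr rfl fun s'' _ => by ring
    · simp [hD, hV0 h' hge, hW0 h' hge, hV0 (h' + 1) (hge.trans h'.le_succ),
        hW0 (h' + 1) (hge.trans h'.le_succ)]
  calc V h s - W h s = -(D (H + 1) - D h) := by rw [hD_start, hD_end]; ring
    _ = ∑ h' ∈ Icc h H, (D h' - D (h' + 1)) := by
      rw [← sum_Icc_sub hh D, ← sum_neg_distrib]
      simp only [neg_sub]
    _ = _ := sum_congr rfl fun h' _ => hD_step h'

end FiniteHorizonMDP

open FiniteHorizonMDP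

theorem stmt7_general {S A : Type*} [Fintype S] [Fintype A] [DecidableEq S]
    (H : ℕ) (P1 P2 : S → A → S → ℝ)
    (r : ℕ → S → A → ℝ)
    (π1 : ℕ → S → A → ℝ)
    (hπ1nn : ∀ h s a, 0 ≤ π1 h s a) (hπ1sum : ∀ h s, ∑ a : A, π1 h s a = 1)
    (V1 V2 : ℕ → S → ℝ)
    -- `V1 = V^{π₁*}_{M₁∪r}` is the optimal value function of `M₁ ∪ r`
    (hV10 : ∀ h, H ≤ h → ∀ s, V1 h s = 0)
    (hV1 : ∀ h, h < H → ∀ s, V1 h s =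
      ∑ a : A, π1 h s a * (r h s a + ∑ s' : S, P1 s a s' * V1 (h+1) s'))
    -- `V2 = V^{π₂*}_{M₂∪r}` is the optimal value function of `M₂ ∪ r`
    (hopt2 : ∀ (π' : ℕ → S → A → ℝ) (V' : ℕ → S → ℝ),
      (∀ h s a, 0 ≤ π' h s a) → (∀ h s, ∑ a : A, π' h s a = 1) →
      (∀ h, H ≤ h → ∀ s, V' h s = (0:ℝ)) →
      (∀ h, h < H → ∀ s : S, V' h s =
        ∑ a : A, π' h s a * (r h s a + ∑ s' : S, P2 s a s' * V' (h+1) s')) →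
      ∀ h (s : S), V' h s ≤ V2 h s)
    -- state-visitation probabilities of `π₁*` in `M₂`
    (ρ : ℕ → ℕ → S → S → ℝ)
    (hρ0 : ∀ h s s', ρ h h s s' = if s' = s then 1 else 0)
    (hρ : ∀ h h' s s', ρ h (h'+1) s s' =
      ∑ s'' : S, ∑ a : A, P2 s'' a s' * π1 h' s'' a * ρ h h' s s'') :
    ∀ h, h ≤ H → ∀ s : S,
      V1 h s - V2 h s ≤
        ∑ h' ∈ Finset.Icc h H, ∑ s' : S, ∑ a' : A, ∑ s'' : S,
          ρ h h' s s' * π1 h' s' a' * (P1 s' a' s'' - P2 s' a' s'') * V1 (h'+1) s'' := by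
  intro h hh s
  have hW0 := policyValue_of_le H P2 r π1
  have hW := policyValue_of_lt H P2 r π1
  have hW_le : policyValue H P2 r π1 h s ≤ V2 h s := hopt2 π1 _ hπ1nn hπ1sum hW0 hW h s
  rw [← value_sub_value_eq_sum_visitation hV10 hV1 hW0 hW hρ0 hρ h hh s]
  linarith

/-- cf. Lemma B.5, first inequality. For two MDPs with transitions
`P₁`, `P₂`, reward `r`, and optimal policies `π₁*`, `π₂*` of `M₁∪r`, `M₂∪r`:
`V*_{M₁∪r,h}(s) − V*_{M₂∪r,h}(s) ≤ ∑_{h'=h}^H ∑_{s',a',s''} ρ^{π₁*}_{M₂,h,h'}(s'|s)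
  π₁*_{h'}(a'|s') (P₁(s''|s',a') − P₂(s''|s',a')) V*_{M₁∪r,h'+1}(s'')`. -/
theorem stmt7 {S A : Type*} [Fintype S] [Fintype A] [DecidableEq S] [DecidableEq A]
    (H : ℕ) (P1 P2 : S → A → S → ℝ)
    (hP1nn : ∀ s a s', 0 ≤ P1 s a s') (hP1sum : ∀ s a, ∑ s' : S, P1 s a s' = 1)
    (hP2nn : ∀ s a s', 0 ≤ P2 s a s') (hP2sum : ∀ s a, ∑ s' : S, P2 s a s' = 1)
    (r : ℕ → S → A → ℝ)
    (π1 π2 : ℕ → S → A → ℝ)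
    (hπ1nn : ∀ h s a, 0 ≤ π1 h s a) (hπ1sum : ∀ h s, ∑ a : A, π1 h s a = 1)
    (hπ2nn : ∀ h s a, 0 ≤ π2 h s a) (hπ2sum : ∀ h s, ∑ a : A, π2 h s a = 1)
    (V1 V2 : ℕ → S → ℝ)
    -- `V1 = V^{π₁*}_{M₁∪r}` is the optimal value function of `M₁ ∪ r`
    (hV10 : ∀ h, H ≤ h → ∀ s, V1 h s = 0)
    (hV1 : ∀ h, h < H → ∀ s, V1 h s =
      ∑ a : A, π1 h s a * (r h s a + ∑ s' : S, P1 s a s' * V1 (h+1) s'))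
    (hopt1 : ∀ (π' : ℕ → S → A → ℝ) (V' : ℕ → S → ℝ),
      (∀ h s a, 0 ≤ π' h s a) → (∀ h s, ∑ a : A, π' h s a = 1) →
      (∀ h, H ≤ h → ∀ s, V' h s = (0:ℝ)) →
      (∀ h, h < H → ∀ s : S, V' h s =
        ∑ a : A, π' h s a * (r h s a + ∑ s' : S, P1 s a s' * V' (h+1) s')) →
      ∀ h (s : S), V' h s ≤ V1 h s)
    -- `V2 = V^{π₂*}_{M₂∪r}` is the optimal value function of `M₂ ∪ r`
    (hV20 : ∀ h, H ≤ h → ∀ s, V2 h s = 0)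
    (hV2 : ∀ h, h < H → ∀ s, V2 h s =
      ∑ a : A, π2 h s a * (r h s a + ∑ s' : S, P2 s a s' * V2 (h+1) s'))
    (hopt2 : ∀ (π' : ℕ → S → A → ℝ) (V' : ℕ → S → ℝ),
      (∀ h s a, 0 ≤ π' h s a) → (∀ h s, ∑ a : A, π' h s a = 1) →
      (∀ h, H ≤ h → ∀ s, V' h s = (0:ℝ)) →
      (∀ h, h < H → ∀ s : S, V' h s =
        ∑ a : A, π' h s a * (r h s a + ∑ s' : S, P2 s a s' * V' (h+1) s')) →
      ∀ h (s : S), V' h s ≤ V2 h s)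
    -- state-visitation probabilities of `π₁*` in `M₂`
    (ρ : ℕ → ℕ → S → S → ℝ)
    (hρ0 : ∀ h s s', ρ h h s s' = if s' = s then 1 else 0)
    (hρ : ∀ h h' s s', ρ h (h'+1) s s' =
      ∑ s'' : S, ∑ a : A, P2 s'' a s' * π1 h' s'' a * ρ h h' s s'') :
    ∀ h, h ≤ H → ∀ s : S,
      V1 h s - V2 h s ≤
        ∑ h' ∈ Finset.Icc h H, ∑ s' : S, ∑ a' : A, ∑ s'' : S,
          ρ h h' s s' * π1 h' s' a' * (P1 s' a' s'' - P2 s' a' s'') * V1 (h'+1) s'' :=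
  stmt7_general H P1 P2 r π1 hπ1nn hπ1sum V1 V2 hV10 hV1 hopt2 ρ hρ0 hρ
end

section
/- In a finite-horizon MDP M with reward r, for any policy π and all s, h: V*_{M∪r,h}(s) − V^π_{M∪r,h}(s) = − Σ_{h'=h}^{H} Σ_{s',a'} ρ^π_{h,h'}(s',a'|s) · A*_{h'}(s',a'), where A*_{h}(s,a) = Q*_h(s,a) − V*_h(s) is the optimal advantage function (which is nonpositive everywhere). -/
open Finset

/-!
Unrolling the Bellman equation of `π` shows that any `W` with
`W_h(s) = E_{a ~ π_h(s)} [g_h(s,a) + E_{s' ~ P(s,a)} W_{h+1}(s')]` is the `ρ^π`-weighted sum of the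
per-step terms `g`. The gap `V^π - V*` satisfies this recursion with `g = A*`, because
`Q*_h(s,a) = r_h(s,a) + E_{s'} V*_{h+1}(s')`, and `A* ≤ 0` since `V*_h(s) = max_a Q*_h(s,a)`.
The unrolling rests on a first-step decomposition of the visitation probabilities,
`ρ_{h,h'}(·|s) = E_{a ~ π_h(s), s' ~ P(s,a)} ρ_{h+1,h'}(·|s')` for `h < h'`, which follows from
the forward recursion defining `ρ` by induction on `h'`.
-/

theorem Finset.sum_sum_comm_pairs {α β γ δ M : Type*} [Fintype α] [Fintype β] [Fintype γ]
    [Fintype δ] [AddCommMonoid M] (f : α → β → γ → δ → M) :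
    ∑ a, ∑ b, ∑ c, ∑ d, f a b c d = ∑ c, ∑ d, ∑ a, ∑ b, f a b c d := by
  calc ∑ a, ∑ b, ∑ c, ∑ d, f a b c d = ∑ p : α × β, ∑ q : γ × δ, f p.1 p.2 q.1 q.2 := by
        simp only [Fintype.sum_prod_type]
    _ = ∑ q : γ × δ, ∑ p : α × β, f p.1 p.2 q.1 q.2 := sum_comm
    _ = ∑ c, ∑ d, ∑ a, ∑ b, f a b c d := by simp only [Fintype.sum_prod_type]

namespace FiniteHorizonMDP

variable {S A : Type*} [Fintype S] [Fintype A]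
  {P : S → A → S → ℝ} {π : ℕ → S → A → ℝ} {ρ : ℕ → ℕ → S → S → A → ℝ}

theorem sum_visitation_self_mul [DecidableEq S]
    (hρ0 : ∀ h s s' a', ρ h h s s' a' = π h s' a' * (if s' = s then 1 else 0))
    (h : ℕ) (s : S) (f : S → A → ℝ) :
    ∑ t, ∑ b, ρ h h s t b * f t b = ∑ a, π h s a * f s a := by
  simp [hρ0]

theorem sum_visitation_succ_mul
    (hρ : ∀ h h' s s' a', ρ h (h'+1) s s' a' =
      ∑ s'' : S, ∑ a'' : A, π (h'+1) s' a' * P s'' a'' s' * ρ h h' s s'' a'')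
    (h h' : ℕ) (s : S) (f : S → A → ℝ) :
    ∑ t, ∑ b, ρ h (h' + 1) s t b * f t b =
      ∑ u, ∑ c, ρ h h' s u c * ∑ t, ∑ b, π (h' + 1) t b * P u c t * f t b := by
  simp only [hρ, sum_mul, mul_sum]
  rw [sum_sum_comm_pairs]
  simp only [mul_comm, mul_left_comm]

theorem sum_visitation_mul_eq_first_step [DecidableEq S]
    (hρ0 : ∀ h s s' a', ρ h h s s' a' = π h s' a' * (if s' = s then 1 else 0))
    (hρ : ∀ h h' s s' a', ρ h (h'+1) s s' a' =
      ∑ s'' : S, ∑ a'' : A, π (h'+1) s' a' * P s'' a'' s' * ρ h h' s s'' a'')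
    {h h' : ℕ} (hh' : h < h') (s : S) (f : S → A → ℝ) :
    ∑ t, ∑ b, ρ h h' s t b * f t b =
      ∑ a, π h s a * ∑ s', P s a s' * ∑ t, ∑ b, ρ (h + 1) h' s' t b * f t b := by
  induction h', hh' using Nat.le_induction generalizing f with
  | base =>
    rw [sum_visitation_succ_mul hρ, sum_visitation_self_mul hρ0]
    simp only [sum_visitation_self_mul hρ0, mul_sum]
    exact sum_congr rfl fun _ _ => sum_congr rfl fun _ _ => sum_congr rfl fun _ _ => by ring
  | succ h' _ ih =>
    simp only [sum_visitation_succ_mul hρ, ih]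

theorem eq_sum_visitation_mul [DecidableEq S]
    (hρ0 : ∀ h s s' a', ρ h h s s' a' = π h s' a' * (if s' = s then 1 else 0))
    (hρ : ∀ h h' s s' a', ρ h (h'+1) s s' a' =
      ∑ s'' : S, ∑ a'' : A, π (h'+1) s' a' * P s'' a'' s' * ρ h h' s s'' a'')
    {H : ℕ} (g : ℕ → S → A → ℝ) (W : ℕ → S → ℝ)
    (hW_H : ∀ s, W H s = ∑ a, π H s a * g H s a)
    (hW : ∀ h < H, ∀ s, W h s = ∑ a, π h s a * (g h s a + ∑ s', P s a s' * W (h + 1) s'))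
    {h : ℕ} (hh : h ≤ H) (s : S) :
    W h s = ∑ h' ∈ Icc h H, ∑ t, ∑ b, ρ h h' s t b * g h' t b := by
  induction hh using Nat.decreasingInduction generalizing s with
  | self => simp [hW_H, sum_visitation_self_mul hρ0]
  | of_succ h hlt ih =>
    have future : ∑ h' ∈ Icc (h + 1) H, ∑ t, ∑ b, ρ h h' s t b * g h' t b =
        ∑ a, π h s a * ∑ s', P s a s' * W (h + 1) s' := by
      rw [sum_congr rfl fun h' hh' =>
        sum_visitation_mul_eq_first_step hρ0 hρ (mem_Icc.1 hh').1 s (g h')]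
      simp only [ih, mul_sum]
      rw [sum_comm]
      exact sum_congr rfl fun _ _ => by rw [sum_comm]
    rw [← insert_Icc_add_one_left_eq_Icc hlt.le, sum_insert (by simp), future,
      sum_visitation_self_mul hρ0, hW h hlt, ← sum_add_distrib]
    simp only [mul_add]

end FiniteHorizonMDP

open FiniteHorizonMDP in
theorem stmt8_general {S A : Type*} [Fintype S] [Fintype A] [DecidableEq S]
    (H : ℕ) (P : S → A → S → ℝ)
    (r : ℕ → S → A → ℝ)
    (π : ℕ → S → A → ℝ)
    (hπsum : ∀ h s, ∑ a : A, π h s a = 1)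
    (Qs : ℕ → S → A → ℝ) (Vs : ℕ → S → ℝ)
    -- `Qs`, `Vs` satisfy the Bellman optimality equations with terminal value 0
    (hQs0 : ∀ h, H ≤ h → ∀ s a, Qs h s a = 0)
    (hVs0 : ∀ h, H ≤ h → ∀ s, Vs h s = 0)
    (hQs : ∀ h, h < H → ∀ s a, Qs h s a = r h s a + ∑ s' : S, P s a s' * Vs (h+1) s')
    (hVs : ∀ h, h < H → ∀ s,
      (∀ a, Qs h s a ≤ Vs h s) ∧ (∃ a, Vs h s = Qs h s a))
    -- `Vp = V^π` is the value function of `π`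
    (Vp : ℕ → S → ℝ)
    (hVp0 : ∀ h, H ≤ h → ∀ s, Vp h s = 0)
    (hVp : ∀ h, h < H → ∀ s, Vp h s =
      ∑ a : A, π h s a * (r h s a + ∑ s' : S, P s a s' * Vp (h+1) s'))
    -- state-action visitation probabilities of `π` starting from `s` at time `h`
    (ρ : ℕ → ℕ → S → S → A → ℝ)
    (hρ0 : ∀ h s s' a', ρ h h s s' a' = π h s' a' * (if s' = s then 1 else 0))
    (hρ : ∀ h h' s s' a', ρ h (h'+1) s s' a' =
      ∑ s'' : S, ∑ a'' : A, π (h'+1) s' a' * P s'' a'' s' * ρ h h' s s'' a'') :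
    (∀ h, h ≤ H → ∀ s : S,
      Vs h s - Vp h s =
        -(∑ h' ∈ Finset.Icc h H, ∑ s' : S, ∑ a' : A,
          ρ h h' s s' a' * (Qs h' s' a' - Vs h' s'))) ∧
    (∀ h, h ≤ H → ∀ s a, Qs h s a - Vs h s ≤ 0) := by
  have gap_step : ∀ h < H, ∀ s, Vp h s - Vs h s = ∑ a, π h s a *
      (Qs h s a - Vs h s + ∑ s', P s a s' * (Vp (h + 1) s' - Vs (h + 1) s')) := by
    intro h hh s
    conv_lhs => rw [hVp h hh s, ← one_mul (Vs h s), ← hπsum h s, sum_mul, ← sum_sub_distrib]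
    refine sum_congr rfl fun a _ => ?_
    simp only [hQs h hh s a, mul_sub, sum_sub_distrib]
    ring
  refine ⟨fun h hh s => ?_, fun h hh s a => ?_⟩
  · rw [← neg_sub, eq_sum_visitation_mul hρ0 hρ (fun h s a => Qs h s a - Vs h s)
      (fun h s => Vp h s - Vs h s) (by simp [hQs0, hVs0, hVp0]) gap_step hh s]
  · rcases hh.lt_or_eq with hlt | rfl
    · linarith [(hVs h hlt s).1 a]
    · simp [hQs0, hVs0]

/-- Performance-difference lemma, cf. Lemma B.13 of the paper / Kakade
& Langford. For any policy `π` and all `s, h`: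
`V*_h(s) − V^π_h(s) = −∑_{h'=h}^H ∑_{s',a'} ρ^π_{h,h'}(s',a'|s) A*_{h'}(s',a')`,
where `A*_h(s,a) = Q*_h(s,a) − V*_h(s)` is the (everywhere nonpositive) optimal
advantage function. -/
theorem stmt8 {S A : Type*} [Fintype S] [Fintype A] [DecidableEq S] [DecidableEq A]
    (H : ℕ) (P : S → A → S → ℝ)
    (hPnn : ∀ s a s', 0 ≤ P s a s') (hPsum : ∀ s a, ∑ s' : S, P s a s' = 1)
    (r : ℕ → S → A → ℝ)
    (π : ℕ → S → A → ℝ)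
    (hπnn : ∀ h s a, 0 ≤ π h s a) (hπsum : ∀ h s, ∑ a : A, π h s a = 1)
    (Qs : ℕ → S → A → ℝ) (Vs : ℕ → S → ℝ)
    -- `Qs`, `Vs` satisfy the Bellman optimality equations with terminal value 0
    (hQs0 : ∀ h, H ≤ h → ∀ s a, Qs h s a = 0)
    (hVs0 : ∀ h, H ≤ h → ∀ s, Vs h s = 0)
    (hQs : ∀ h, h < H → ∀ s a, Qs h s a = r h s a + ∑ s' : S, P s a s' * Vs (h+1) s')
    (hVs : ∀ h, h < H → ∀ s,
      (∀ a, Qs h s a ≤ Vs h s) ∧ (∃ a, Vs h s = Qs h s a))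
    -- `Vp = V^π` is the value function of `π`
    (Vp : ℕ → S → ℝ)
    (hVp0 : ∀ h, H ≤ h → ∀ s, Vp h s = 0)
    (hVp : ∀ h, h < H → ∀ s, Vp h s =
      ∑ a : A, π h s a * (r h s a + ∑ s' : S, P s a s' * Vp (h+1) s'))
    -- state-action visitation probabilities of `π` starting from `s` at time `h`
    (ρ : ℕ → ℕ → S → S → A → ℝ)
    (hρ0 : ∀ h s s' a', ρ h h s s' a' = π h s' a' * (if s' = s then 1 else 0))
    (hρ : ∀ h h' s s' a', ρ h (h'+1) s s' a' =
      ∑ s'' : S, ∑ a'' : A, π (h'+1) s' a' * P s'' a'' s' * ρ h h' s s'' a'') :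
    (∀ h, h ≤ H → ∀ s : S,
      Vs h s - Vp h s =
        -(∑ h' ∈ Finset.Icc h H, ∑ s' : S, ∑ a' : A,
          ρ h h' s s' a' * (Qs h' s' a' - Vs h' s'))) ∧
    (∀ h, h ≤ H → ∀ s a, Qs h s a - Vs h s ≤ 0) :=
  stmt8_general H P r π hπsum Qs Vs hQs0 hVs0 hQs hVs Vp hVp0 hVp ρ hρ0 hρ
end

section
/- Let M be a finite-horizon MDP without reward with true transition model P and estimated transition model P̂, and let C_h : S × A → ℝ_{≥0} be bounds such that for every reward r, policy π, state s, action a, timestep h: |Σ_{s'} (P(s'|s,a) − P̂(s'|s,a)) V^π_{M∪r,h+1}(s')| ≤ C_h(s,a). Define E_H(s,a) = 0 and E_h(s,a) = min((H−h)R_max, C_h(s,a) + Σ_{s'} P̂(s'|s,a) max_{a'} E_{h+1}(s',a')). Then for every policy π, reward r bounded in [0, R_max], and all s, a, h: |Q^π_{M̂∪r,h}(s,a) − Q^π_{M∪r,h}(s,a)| ≤ E_h(s,a), where M̂ uses transition model P̂. -/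
open Finset

/-! The simulation-lemma argument: one step of the Bellman recursion splits `Q̂_h − Q_h` into
the `P̂`-average of `V̂_{h+1} − V_{h+1}`, which by backward induction is at most
`∑_{s'} P̂(s'|s,a) max_{a'} E_{h+1}(s',a')`, and the model error against the true value
`V_{h+1}`, which is at most `C_h(s,a)` by hypothesis. Independently, both Q-functions lie in
`[0, (H − h) Rmax]`, which gives the other term of the minimum. -/

theorem Nat.backward_induction {H : ℕ} {motive : ℕ → Prop} (base : ∀ h, H ≤ h → motive h)
    (step : ∀ h, h < H → motive (h + 1) → motive h) (h : ℕ) : motive h := by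
  induction hk : H - h generalizing h with
  | zero => exact base h (by omega)
  | succ k ih => exact step h (by omega) (ih (h + 1) (by omega))

section WeightedSum

variable {ι : Type*} [Fintype ι] {p f g : ι → ℝ} {c : ℝ}

theorem weighted_sum_le_of_le (hp : ∀ i, 0 ≤ p i) (hp1 : ∑ i, p i = 1) (hf : ∀ i, f i ≤ c) :
    ∑ i, p i * f i ≤ c :=
  calc ∑ i, p i * f i ≤ ∑ i, p i * c :=
        sum_le_sum fun i _ => mul_le_mul_of_nonneg_left (hf i) (hp i)
    _ = c := by rw [← sum_mul, hp1, one_mul]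

theorem abs_weighted_sum_le (hp : ∀ i, 0 ≤ p i) (hf : ∀ i, |f i| ≤ g i) :
    |∑ i, p i * f i| ≤ ∑ i, p i * g i :=
  (abs_sum_le_sum_abs _ _).trans <| sum_le_sum fun i _ => by
    rw [abs_mul, abs_of_nonneg (hp i)]
    exact mul_le_mul_of_nonneg_left (hf i) (hp i)

end WeightedSum

section QFunction

variable {S A : Type*} [Fintype S] [Fintype A]

/-- `Q = Q^π_{M∪r}` for the transition kernel `P` and horizon `H`. -/
def IsQFunction (H : ℕ) (P : S → A → S → ℝ) (r π Q : ℕ → S → A → ℝ) : Prop :=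
  (∀ h, H ≤ h → ∀ s a, Q h s a = 0) ∧
    ∀ h, h < H → ∀ s a, Q h s a =
      r h s a + ∑ s' : S, P s a s' * ∑ a' : A, π (h+1) s' a' * Q (h+1) s' a'

variable {H : ℕ} {Rmax : ℝ} {P Ph : S → A → S → ℝ} {r π Q Qh : ℕ → S → A → ℝ}

theorem IsQFunction.mem_Icc (hQ : IsQFunction H P r π Q)
    (hPnn : ∀ s a s', 0 ≤ P s a s') (hPsum : ∀ s a, ∑ s' : S, P s a s' = 1)
    (hr : ∀ h s a, 0 ≤ r h s a ∧ r h s a ≤ Rmax)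
    (hπnn : ∀ h s a, 0 ≤ π h s a) (hπsum : ∀ h s, ∑ a : A, π h s a = 1) :
    ∀ h s a, Q h s a ∈ Set.Icc 0 (((H - h : ℕ) : ℝ) * Rmax) := by
  refine Nat.backward_induction (H := H) (fun h hh s a => ?_) (fun h hh ih s a => ?_)
  · simp [hQ.1 h hh, Nat.sub_eq_zero_of_le hh]
  · have hV : ∀ s', ∑ a', π (h+1) s' a' * Q (h+1) s' a' ∈
        Set.Icc 0 (((H - (h+1) : ℕ) : ℝ) * Rmax) := fun s' =>
      ⟨sum_nonneg fun a' _ => mul_nonneg (hπnn _ _ _) (ih s' a').1,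
        weighted_sum_le_of_le (hπnn _ _) (hπsum _ _) fun a' => (ih s' a').2⟩
    have hnext := weighted_sum_le_of_le (hPnn s a) (hPsum s a) fun s' => (hV s').2
    have hH : ((H - h : ℕ) : ℝ) = ((H - (h+1) : ℕ) : ℝ) + 1 := by
      rw [show H - h = H - (h+1) + 1 by omega]; push_cast; ring
    rw [hQ.2 h hh s a, hH]
    exact ⟨add_nonneg (hr h s a).1 (sum_nonneg fun s' _ => mul_nonneg (hPnn _ _ _) (hV s').1),
      by linarith [(hr h s a).2, hnext]⟩

theorem IsQFunction.sub_eq (hQh : IsQFunction H Ph r π Qh) (hQ : IsQFunction H P r π Q)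
    {h : ℕ} (hh : h < H) (s : S) (a : A) :
    Qh h s a - Q h s a =
      ∑ s', Ph s a s' * ∑ a', π (h+1) s' a' * (Qh (h+1) s' a' - Q (h+1) s' a') -
        ∑ s', (P s a s' - Ph s a s') * ∑ a', π (h+1) s' a' * Q (h+1) s' a' := by
  rw [hQh.2 h hh s a, hQ.2 h hh s a]
  simp only [mul_sub, sub_mul, sum_sub_distrib]
  ring

end QFunction

theorem stmt9_general {S A : Type*} [Fintype S] [Fintype A] [Nonempty A]
    (H : ℕ) (Rmax : ℝ)
    (P Ph : S → A → S → ℝ)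
    (hPnn : ∀ s a s', 0 ≤ P s a s') (hPsum : ∀ s a, ∑ s' : S, P s a s' = 1)
    (hPhnn : ∀ s a s', 0 ≤ Ph s a s') (hPhsum : ∀ s a, ∑ s' : S, Ph s a s' = 1)
    (C : ℕ → S → A → ℝ)
    -- the good event: `C` bounds the transition error against every value function
    (hC : ∀ (r' π' Q' : ℕ → S → A → ℝ),
      (∀ h s a, 0 ≤ r' h s a ∧ r' h s a ≤ Rmax) →
      (∀ h s a, 0 ≤ π' h s a) → (∀ h s, ∑ a : A, π' h s a = 1) →
      (∀ h, H ≤ h → ∀ s a, Q' h s a = 0) →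
      (∀ h, h < H → ∀ s a, Q' h s a =
        r' h s a + ∑ s' : S, P s a s' * ∑ a' : A, π' (h+1) s' a' * Q' (h+1) s' a') →
      ∀ h, h < H → ∀ s a,
        |∑ s' : S, (P s a s' - Ph s a s') *
          (∑ a' : A, π' (h+1) s' a' * Q' (h+1) s' a')| ≤ C h s a)
    (E : ℕ → S → A → ℝ)
    (hE0 : ∀ h, H ≤ h → ∀ s a, E h s a = 0)
    (hE : ∀ h, h < H → ∀ s a, E h s a =
      min (((H - h : ℕ) : ℝ) * Rmax)
        (C h s a + ∑ s' : S, Ph s a s' *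
          Finset.univ.sup' Finset.univ_nonempty (fun a' => E (h+1) s' a')))
    (r : ℕ → S → A → ℝ)
    (hr : ∀ h s a, 0 ≤ r h s a ∧ r h s a ≤ Rmax)
    (π : ℕ → S → A → ℝ)
    (hπnn : ∀ h s a, 0 ≤ π h s a) (hπsum : ∀ h s, ∑ a : A, π h s a = 1)
    (Q Qh : ℕ → S → A → ℝ)
    -- `Q = Q^π_{M∪r}` (true transitions), `Qh = Q^π_{M̂∪r}` (estimated transitions)
    (hQ0 : ∀ h, H ≤ h → ∀ s a, Q h s a = 0)
    (hQ : ∀ h, h < H → ∀ s a, Q h s a =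
      r h s a + ∑ s' : S, P s a s' * ∑ a' : A, π (h+1) s' a' * Q (h+1) s' a')
    (hQh0 : ∀ h, H ≤ h → ∀ s a, Qh h s a = 0)
    (hQh : ∀ h, h < H → ∀ s a, Qh h s a =
      r h s a + ∑ s' : S, Ph s a s' * ∑ a' : A, π (h+1) s' a' * Qh (h+1) s' a') :
    ∀ h s a, |Qh h s a - Q h s a| ≤ E h s a := by
  have hQfun : IsQFunction H P r π Q := ⟨hQ0, hQ⟩
  have hQhfun : IsQFunction H Ph r π Qh := ⟨hQh0, hQh⟩
  have hQbd := hQfun.mem_Icc hPnn hPsum hr hπnn hπsum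
  have hQhbd := hQhfun.mem_Icc hPhnn hPhsum hr hπnn hπsum
  refine Nat.backward_induction (H := H) (fun h hh s a => ?_) (fun h hh ih s a => ?_)
  · simp [hQ0 h hh, hQh0 h hh, hE0 h hh]
  have hV : ∀ s', |∑ a', π (h+1) s' a' * (Qh (h+1) s' a' - Q (h+1) s' a')| ≤
      univ.sup' univ_nonempty (fun a' => E (h+1) s' a') := fun s' =>
    (abs_weighted_sum_le (hπnn _ _) (ih s')).trans <|
      weighted_sum_le_of_le (hπnn _ _) (hπsum _ _) fun a' => le_sup' _ (mem_univ a')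
  rw [hE h hh s a]
  refine le_min (abs_sub_le_of_nonneg_of_le (hQhbd h s a).1 (hQhbd h s a).2
    (hQbd h s a).1 (hQbd h s a).2) ?_
  rw [hQhfun.sub_eq hQfun hh]
  exact ((abs_sub _ _).trans <| add_le_add (abs_weighted_sum_le (hPhnn s a) hV)
    (hC r π Q hr hπnn hπsum hQ0 hQ h hh s a)).trans_eq (add_comm _ _)

/-- cf. Lemma B.10 of the paper. If `C_h(s,a)` bounds the transition
estimation error on value functions, and `E` is defined by the error recursion
`E_H = 0`, `E_h(s,a) = min((H−h)Rmax, C_h(s,a) + ∑_{s'} P̂(s'|s,a) max_{a'} E_{h+1}(s',a'))`,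
then for every policy `π` and reward `r` bounded in `[0, Rmax]`:
`|Q^π_{M̂∪r,h}(s,a) − Q^π_{M∪r,h}(s,a)| ≤ E_h(s,a)`. -/
theorem stmt9 {S A : Type*} [Fintype S] [Fintype A] [Nonempty A]
    [DecidableEq S] [DecidableEq A]
    (H : ℕ) (Rmax : ℝ) (hR : 0 ≤ Rmax)
    (P Ph : S → A → S → ℝ)
    (hPnn : ∀ s a s', 0 ≤ P s a s') (hPsum : ∀ s a, ∑ s' : S, P s a s' = 1)
    (hPhnn : ∀ s a s', 0 ≤ Ph s a s') (hPhsum : ∀ s a, ∑ s' : S, Ph s a s' = 1)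
    (C : ℕ → S → A → ℝ)
    -- the good event: `C` bounds the transition error against every value function
    (hC : ∀ (r' π' Q' : ℕ → S → A → ℝ),
      (∀ h s a, 0 ≤ r' h s a ∧ r' h s a ≤ Rmax) →
      (∀ h s a, 0 ≤ π' h s a) → (∀ h s, ∑ a : A, π' h s a = 1) →
      (∀ h, H ≤ h → ∀ s a, Q' h s a = 0) →
      (∀ h, h < H → ∀ s a, Q' h s a =
        r' h s a + ∑ s' : S, P s a s' * ∑ a' : A, π' (h+1) s' a' * Q' (h+1) s' a') →
      ∀ h, h < H → ∀ s a,
        |∑ s' : S, (P s a s' - Ph s a s') *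
          (∑ a' : A, π' (h+1) s' a' * Q' (h+1) s' a')| ≤ C h s a)
    (E : ℕ → S → A → ℝ)
    (hE0 : ∀ h, H ≤ h → ∀ s a, E h s a = 0)
    (hE : ∀ h, h < H → ∀ s a, E h s a =
      min (((H - h : ℕ) : ℝ) * Rmax)
        (C h s a + ∑ s' : S, Ph s a s' *
          Finset.univ.sup' Finset.univ_nonempty (fun a' => E (h+1) s' a')))
    (r : ℕ → S → A → ℝ)
    (hr : ∀ h s a, 0 ≤ r h s a ∧ r h s a ≤ Rmax)
    (π : ℕ → S → A → ℝ)
    (hπnn : ∀ h s a, 0 ≤ π h s a) (hπsum : ∀ h s, ∑ a : A, π h s a = 1)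
    (Q Qh : ℕ → S → A → ℝ)
    -- `Q = Q^π_{M∪r}` (true transitions), `Qh = Q^π_{M̂∪r}` (estimated transitions)
    (hQ0 : ∀ h, H ≤ h → ∀ s a, Q h s a = 0)
    (hQ : ∀ h, h < H → ∀ s a, Q h s a =
      r h s a + ∑ s' : S, P s a s' * ∑ a' : A, π (h+1) s' a' * Q (h+1) s' a')
    (hQh0 : ∀ h, H ≤ h → ∀ s a, Qh h s a = 0)
    (hQh : ∀ h, h < H → ∀ s a, Qh h s a =
      r h s a + ∑ s' : S, Ph s a s' * ∑ a' : A, π (h+1) s' a' * Qh (h+1) s' a') :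
    ∀ h s a, |Qh h s a - Q h s a| ≤ E h s a :=
  stmt9_general H Rmax P Ph hPnn hPsum hPhnn hPhsum C hC E hE0 hE r hr π hπnn hπsum Q Qh hQ0 hQ hQh0
    hQh
end

section
/- In the setting of the error upper bound E defined with estimated transitions, assume the 'good event' that for all s, a, h: |Σ_{s'}(P̂(s'|s,a) − P(s'|s,a)) f(s')| ≤ C_h(s,a) for every function f with 0 ≤ f ≤ (H−h−1)R_max (in particular for f(s') = max_{a'} E_{h+1}(s',a')). Then for all s, a, h: E_h(s,a) ≤ 2·C_h(s,a) + Σ_{s'} P(s'|s,a)·max_{a'} E_{h+1}(s',a'), where E is defined by E_H = 0 and E_h(s,a) = min((H−h)R_max, C_h(s,a) + Σ_{s'} P̂(s'|s,a) max_{a'} E_{h+1}(s',a')). -/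
/-!
The value `f s' = max_{a'} E_{h+1}(s',a')` satisfies `0 ≤ f ≤ (H-h-1)·Rmax` (nonnegativity by
backward induction on `h`), so the good event applies to it and `P̂ f ≤ C_h + P f`; hence
`E_h ≤ C_h + P̂ f ≤ 2 C_h + P f`.
-/

open Finset

theorem sum_mul_le_add_sum_mul_of_abs_sum_sub_mul_le {ι : Type*} (s : Finset ι)
    {p q f : ι → ℝ} {c : ℝ} (h : |∑ i ∈ s, (q i - p i) * f i| ≤ c) :
    ∑ i ∈ s, q i * f i ≤ c + ∑ i ∈ s, p i * f i := by
  have hsplit : ∑ i ∈ s, q i * f i = ∑ i ∈ s, (q i - p i) * f i + ∑ i ∈ s, p i * f i := by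
    rw [← sum_add_distrib]
    exact sum_congr rfl fun i _ => by ring
  linarith [le_abs_self (∑ i ∈ s, (q i - p i) * f i)]

section

variable {S A : Type*} [Fintype S] [Fintype A] [Nonempty A]

theorem le_horizon_mul_of_eq_min {H : ℕ} {Rmax : ℝ} {Ph : S → A → S → ℝ}
    {C : ℕ → S → A → ℝ} {E : ℕ → S → A → ℝ}
    (hE0 : ∀ h, H ≤ h → ∀ s a, E h s a = 0)
    (hE : ∀ h, h < H → ∀ s a, E h s a =
      min (((H - h : ℕ) : ℝ) * Rmax)
        (C h s a + ∑ s' : S, Ph s a s' * univ.sup' univ_nonempty (fun a' => E (h+1) s' a')))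
    (h : ℕ) (s : S) (a : A) : E h s a ≤ ((H - h : ℕ) : ℝ) * Rmax := by
  rcases lt_or_ge h H with hhH | hHh
  · exact hE h hhH s a ▸ min_le_left _ _
  · simp [hE0 h hHh s a, Nat.sub_eq_zero_of_le hHh]

theorem nonneg_of_eq_min {H : ℕ} {Rmax : ℝ} (hR : 0 ≤ Rmax) {Ph : S → A → S → ℝ}
    (hPhnn : ∀ s a s', 0 ≤ Ph s a s') {C : ℕ → S → A → ℝ} (hCnn : ∀ h s a, 0 ≤ C h s a)
    {E : ℕ → S → A → ℝ}
    (hE0 : ∀ h, H ≤ h → ∀ s a, E h s a = 0)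
    (hE : ∀ h, h < H → ∀ s a, E h s a =
      min (((H - h : ℕ) : ℝ) * Rmax)
        (C h s a + ∑ s' : S, Ph s a s' * univ.sup' univ_nonempty (fun a' => E (h+1) s' a')))
    (h : ℕ) (s : S) (a : A) : 0 ≤ E h s a := by
  rcases lt_or_ge H h with hHh | hhH
  · exact (hE0 h hHh.le s a).ge
  induction hhH using Nat.decreasingInduction generalizing s a with
  | self => exact (hE0 H le_rfl s a).ge
  | of_succ h hhH ih =>
    obtain ⟨a₀⟩ := ‹Nonempty A›
    have hsup : ∀ s', 0 ≤ univ.sup' univ_nonempty (fun a' => E (h+1) s' a') := fun s' =>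
      le_sup'_of_le _ (mem_univ a₀) (ih s' a₀)
    rw [hE h hhH s a]
    exact le_min (by positivity)
      (add_nonneg (hCnn h s a) (sum_nonneg fun s' _ => mul_nonneg (hPhnn s a s') (hsup s')))

end

theorem stmt12_general {S A : Type*} [Fintype S] [Fintype A] [Nonempty A]
    (H : ℕ) (Rmax : ℝ) (hR : 0 ≤ Rmax)
    (P Ph : S → A → S → ℝ)
    (hPhnn : ∀ s a s', 0 ≤ Ph s a s')
    (C : ℕ → S → A → ℝ) (hCnn : ∀ h s a, 0 ≤ C h s a)
    -- the good event: the transition estimation error against any function `f` with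
    -- `0 ≤ f ≤ (H−h−1)·Rmax` is bounded by `C_h(s,a)`
    (hGood : ∀ h, h < H → ∀ s a, ∀ f : S → ℝ,
      (∀ s', 0 ≤ f s') →
      (∀ s', f s' ≤ ((H - (h+1) : ℕ) : ℝ) * Rmax) →
      |∑ s' : S, (Ph s a s' - P s a s') * f s'| ≤ C h s a)
    (E : ℕ → S → A → ℝ)
    (hE0 : ∀ h, H ≤ h → ∀ s a, E h s a = 0)
    (hE : ∀ h, h < H → ∀ s a, E h s a =
      min (((H - h : ℕ) : ℝ) * Rmax)
        (C h s a + ∑ s' : S, Ph s a s' *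
          Finset.univ.sup' Finset.univ_nonempty (fun a' => E (h+1) s' a'))) :
    ∀ h, h < H → ∀ s a,
      E h s a ≤ 2 * C h s a + ∑ s' : S, P s a s' *
        Finset.univ.sup' Finset.univ_nonempty (fun a' => E (h+1) s' a') := by
  intro h hh s a
  set f : S → ℝ := fun s' => univ.sup' univ_nonempty (fun a' => E (h+1) s' a')
  obtain ⟨a₀⟩ := ‹Nonempty A›
  have hf_nonneg : ∀ s', 0 ≤ f s' := fun s' =>
    le_sup'_of_le _ (mem_univ a₀) (nonneg_of_eq_min hR hPhnn hCnn hE0 hE (h+1) s' a₀)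
  have hf_le : ∀ s', f s' ≤ ((H - (h+1) : ℕ) : ℝ) * Rmax := fun s' =>
    sup'_le _ _ fun a' _ => le_horizon_mul_of_eq_min hE0 hE (h+1) s' a'
  calc E h s a ≤ C h s a + ∑ s', Ph s a s' * f s' := hE h hh s a ▸ min_le_right _ _
    _ ≤ C h s a + (C h s a + ∑ s', P s a s' * f s') :=
      add_le_add_right (sum_mul_le_add_sum_mul_of_abs_sum_sub_mul_le _
        (hGood h hh s a f hf_nonneg hf_le)) _
    _ = 2 * C h s a + ∑ s', P s a s' * f s' := by ring

/-- cf. Lemma B.16 of the paper. Under the good event, the error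
recursion under the estimated dynamics `P̂` can be converted into one under the true
dynamics `P` at the cost of doubling the confidence width:
`E_h(s,a) ≤ 2·C_h(s,a) + ∑_{s'} P(s'|s,a)·max_{a'} E_{h+1}(s',a')`. -/
theorem stmt12 {S A : Type*} [Fintype S] [Fintype A] [Nonempty A]
    [DecidableEq S] [DecidableEq A]
    (H : ℕ) (Rmax : ℝ) (hR : 0 ≤ Rmax)
    (P Ph : S → A → S → ℝ)
    (hPnn : ∀ s a s', 0 ≤ P s a s') (hPsum : ∀ s a, ∑ s' : S, P s a s' = 1)
    (hPhnn : ∀ s a s', 0 ≤ Ph s a s') (hPhsum : ∀ s a, ∑ s' : S, Ph s a s' = 1)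
    (C : ℕ → S → A → ℝ) (hCnn : ∀ h s a, 0 ≤ C h s a)
    -- the good event: the transition estimation error against any function `f` with
    -- `0 ≤ f ≤ (H−h−1)·Rmax` is bounded by `C_h(s,a)`
    (hGood : ∀ h, h < H → ∀ s a, ∀ f : S → ℝ,
      (∀ s', 0 ≤ f s') →
      (∀ s', f s' ≤ ((H - (h+1) : ℕ) : ℝ) * Rmax) →
      |∑ s' : S, (Ph s a s' - P s a s') * f s'| ≤ C h s a)
    (E : ℕ → S → A → ℝ)
    (hE0 : ∀ h, H ≤ h → ∀ s a, E h s a = 0)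
    (hE : ∀ h, h < H → ∀ s a, E h s a =
      min (((H - h : ℕ) : ℝ) * Rmax)
        (C h s a + ∑ s' : S, Ph s a s' *
          Finset.univ.sup' Finset.univ_nonempty (fun a' => E (h+1) s' a'))) :
    ∀ h, h < H → ∀ s a,
      E h s a ≤ 2 * C h s a + ∑ s' : S, P s a s' *
        Finset.univ.sup' Finset.univ_nonempty (fun a' => E (h+1) s' a') :=
  stmt12_general H Rmax hR P Ph hPhnn C hCnn hGood E hE0 hE
end

section
/- Let ε > 0, and suppose that for all s, a, h the reward estimation error satisfies |r_h(s,a) − r̂_h(s,a)| ≤ C_h(s,a) with H·max_{s,a,h} C_h(s,a) ≤ ε/2, where r is any feasible reward for the true IRL problem and r̂ any feasible reward for the estimated problem. Let π* be optimal for M∪r in the true MDP and π̂* optimal for the recovered reward. Then for all s, a, h: |Q^{π*}_{M∪r,h}(s,a) − Q^{π̂*}_{M∪r,h}(s,a)| ≤ 2H·max_{s,a,h} C_h(s,a) ≤ ε. -/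
/-!
Both occupancy measures start as the point mass at `(s, a)`, so the step `h' = h` of the
simulation-lemma sum vanishes. At each of the remaining `H - h` steps the difference of two
probability distributions, paired with a reward error bounded by `Cmax`, contributes at most
`2 Cmax`.
-/

open Finset

theorem sum_sub_mul_le_two_mul {ι : Type*} [Fintype ι] {p q d : ι → ℝ} {c : ℝ}
    (hp : ∀ i, 0 ≤ p i) (hq : ∀ i, 0 ≤ q i) (hp₁ : ∑ i, p i = 1) (hq₁ : ∑ i, q i = 1)
    (hd : ∀ i, |d i| ≤ c) :
    ∑ i, (p i - q i) * d i ≤ 2 * c :=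
  calc ∑ i, (p i - q i) * d i ≤ ∑ i, (p i + q i) * c := by
        refine sum_le_sum fun i _ => ?_
        nlinarith [abs_le.mp (hd i), hp i, hq i]
    _ = 2 * c := by rw [← sum_mul, sum_add_distrib, hp₁, hq₁]; ring

theorem sum_Icc_le_of_eq_zero {f : ℕ → ℝ} {h H : ℕ} {b : ℝ} (hh : h ≤ H) (hb : 0 ≤ b)
    (hf₀ : f h = 0) (hf : ∀ h' ∈ Ioc h H, f h' ≤ b) :
    ∑ h' ∈ Icc h H, f h' ≤ H * b :=
  calc ∑ h' ∈ Icc h H, f h' = ∑ h' ∈ Ioc h H, f h' := by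
        rw [Icc_eq_cons_Ioc hh, sum_cons, hf₀, zero_add]
    _ ≤ (Ioc h H).card • b := sum_le_card_nsmul _ _ _ hf
    _ ≤ H * b := by
        rw [nsmul_eq_mul, Nat.card_Ioc]
        exact mul_le_mul_of_nonneg_right (by exact_mod_cast H.sub_le h) hb

theorem sum_Icc_occupancy_sub_mul_le {S A : Type*} [Fintype S] [Fintype A] {H h : ℕ}
    (hh : h ≤ H) {c : ℝ} (hc : 0 ≤ c) {ρ₁ ρ₂ d : ℕ → S → A → ℝ}
    (hρ₁ : ∀ h' s a, 0 ≤ ρ₁ h' s a) (hρ₁₁ : ∀ h', h ≤ h' → h' ≤ H → ∑ s, ∑ a, ρ₁ h' s a = 1)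
    (hρ₂ : ∀ h' s a, 0 ≤ ρ₂ h' s a) (hρ₂₁ : ∀ h', h ≤ h' → h' ≤ H → ∑ s, ∑ a, ρ₂ h' s a = 1)
    (hρ₀ : ρ₁ h = ρ₂ h) (hd : ∀ h' s a, |d h' s a| ≤ c) :
    ∑ h' ∈ Icc h H, ∑ s, ∑ a, (ρ₁ h' s a - ρ₂ h' s a) * d h' s a ≤ 2 * H * c := by
  rw [mul_comm 2, mul_assoc]
  refine sum_Icc_le_of_eq_zero hh (by positivity) ?_ fun h' hh' => ?_
  · simp only [hρ₀, sub_self, zero_mul, sum_const_zero]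
  obtain ⟨hhh', hh'H⟩ := mem_Ioc.mp hh'
  rw [← Fintype.sum_prod_type']
  exact sum_sub_mul_le_two_mul (fun x : S × A => hρ₁ h' x.1 x.2) (fun x => hρ₂ h' x.1 x.2)
      ((Fintype.sum_prod_type' _).trans (hρ₁₁ h' hhh'.le hh'H))
      ((Fintype.sum_prod_type' _).trans (hρ₂₁ h' hhh'.le hh'H)) (fun x => hd h' x.1 x.2)

theorem stmt13_general {S A : Type*} [Fintype S] [Fintype A] [DecidableEq S] [DecidableEq A]
    (H : ℕ) (ε Cmax : ℝ)
    (r rh : ℕ → S → A → ℝ)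
    (C : ℕ → S → A → ℝ)
    (hrC : ∀ h s a, |r h s a - rh h s a| ≤ C h s a)
    (hCmax : ∀ h s a, C h s a ≤ Cmax)
    (hstop : (H : ℝ) * Cmax ≤ ε / 2)
    -- `Qs = Q^{π*}_{M∪r}` and `Qh = Q^{π̂*}_{M∪r}`
    (Qs Qh : ℕ → S → A → ℝ)
    -- occupancy measures of `π*` and `π̂*`; they are probability distributions
    (ρs ρh : ℕ → ℕ → S → A → S → A → ℝ)
    (hρsnn : ∀ h h' s a s' a', 0 ≤ ρs h h' s a s' a')
    (hρssum : ∀ h h' s a, h ≤ h' → h' ≤ H → ∑ s' : S, ∑ a' : A, ρs h h' s a s' a' = 1)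
    (hρs0 : ∀ h s a s' a', ρs h h s a s' a' = if s' = s ∧ a' = a then 1 else 0)
    (hρhnn : ∀ h h' s a s' a', 0 ≤ ρh h h' s a s' a')
    (hρhsum : ∀ h h' s a, h ≤ h' → h' ≤ H → ∑ s' : S, ∑ a' : A, ρh h h' s a s' a' = 1)
    (hρh0 : ∀ h s a s' a', ρh h h s a s' a' = if s' = s ∧ a' = a then 1 else 0)
    -- the simulation lemma, in both directions
    (hsim1 : ∀ h, h ≤ H → ∀ s a,
      Qs h s a - Qh h s a ≤
        ∑ h' ∈ Finset.Icc h H, ∑ s' : S, ∑ a' : A,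
          (ρs h h' s a s' a' - ρh h h' s a s' a') * (r h' s' a' - rh h' s' a'))
    (hsim2 : ∀ h, h ≤ H → ∀ s a,
      Qh h s a - Qs h s a ≤
        ∑ h' ∈ Finset.Icc h H, ∑ s' : S, ∑ a' : A,
          (ρh h h' s a s' a' - ρs h h' s a s' a') * (rh h' s' a' - r h' s' a')) :
    (∀ h, h ≤ H → ∀ s a, |Qs h s a - Qh h s a| ≤ 2 * (H : ℝ) * Cmax) ∧
      2 * (H : ℝ) * Cmax ≤ ε := by
  refine ⟨fun h hh s a => ?_, by linarith⟩
  have hCmax₀ : 0 ≤ Cmax := (abs_nonneg _).trans ((hrC 0 s a).trans (hCmax 0 s a))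
  have hd : ∀ h' s' a', |r h' s' a' - rh h' s' a'| ≤ Cmax :=
    fun h' s' a' => (hrC h' s' a').trans (hCmax h' s' a')
  have hρ₀ : ρs h h s a = ρh h h s a := by
    funext s' a'
    rw [hρs0, hρh0]
  rw [abs_sub_le_iff]
  exact ⟨(hsim1 h hh s a).trans <| sum_Icc_occupancy_sub_mul_le hh hCmax₀
      (hρsnn h · s a) (hρssum h · s a) (hρhnn h · s a) (hρhsum h · s a) hρ₀ hd,
    (hsim2 h hh s a).trans <| sum_Icc_occupancy_sub_mul_le hh hCmax₀
      (hρhnn h · s a) (hρhsum h · s a) (hρsnn h · s a) (hρssum h · s a) hρ₀.symm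
      fun h' s' a' => abs_sub_comm (r h' s' a') _ ▸ hd h' s' a'⟩

/-- cf. Corollary B.5 of the paper. If the reward estimation error
satisfies `|r − r̂| ≤ C` with `H·max C ≤ ε/2`, then the optimal policy `π̂*` of the
recovered reward is `ε`-close in Q-value to the optimal policy `π*` of the true reward:
`|Q^{π*}_{M∪r,h}(s,a) − Q^{π̂*}_{M∪r,h}(s,a)| ≤ 2H·max C ≤ ε`. -/
theorem stmt13 {S A : Type*} [Fintype S] [Fintype A] [DecidableEq S] [DecidableEq A]
    (H : ℕ) (ε Cmax : ℝ) (hε : 0 < ε)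
    (r rh : ℕ → S → A → ℝ)
    (C : ℕ → S → A → ℝ)
    (hrC : ∀ h s a, |r h s a - rh h s a| ≤ C h s a)
    (hCmax : ∀ h s a, C h s a ≤ Cmax)
    (hstop : (H : ℝ) * Cmax ≤ ε / 2)
    -- `Qs = Q^{π*}_{M∪r}` and `Qh = Q^{π̂*}_{M∪r}`
    (Qs Qh : ℕ → S → A → ℝ)
    -- occupancy measures of `π*` and `π̂*`; they are probability distributions
    (ρs ρh : ℕ → ℕ → S → A → S → A → ℝ)
    (hρsnn : ∀ h h' s a s' a', 0 ≤ ρs h h' s a s' a')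
    (hρssum : ∀ h h' s a, h ≤ h' → h' ≤ H → ∑ s' : S, ∑ a' : A, ρs h h' s a s' a' = 1)
    (hρs0 : ∀ h s a s' a', ρs h h s a s' a' = if s' = s ∧ a' = a then 1 else 0)
    (hρhnn : ∀ h h' s a s' a', 0 ≤ ρh h h' s a s' a')
    (hρhsum : ∀ h h' s a, h ≤ h' → h' ≤ H → ∑ s' : S, ∑ a' : A, ρh h h' s a s' a' = 1)
    (hρh0 : ∀ h s a s' a', ρh h h s a s' a' = if s' = s ∧ a' = a then 1 else 0)
    -- the simulation lemma, in both directions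
    (hsim1 : ∀ h, h ≤ H → ∀ s a,
      Qs h s a - Qh h s a ≤
        ∑ h' ∈ Finset.Icc h H, ∑ s' : S, ∑ a' : A,
          (ρs h h' s a s' a' - ρh h h' s a s' a') * (r h' s' a' - rh h' s' a'))
    (hsim2 : ∀ h, h ≤ H → ∀ s a,
      Qh h s a - Qs h s a ≤
        ∑ h' ∈ Finset.Icc h H, ∑ s' : S, ∑ a' : A,
          (ρh h h' s a s' a' - ρs h h' s a s' a') * (rh h' s' a' - r h' s' a')) :
    (∀ h, h ≤ H → ∀ s a, |Qs h s a - Qh h s a| ≤ 2 * (H : ℝ) * Cmax) ∧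
      2 * (H : ℝ) * Cmax ≤ ε :=
  stmt13_general H ε Cmax r rh C hrC hCmax hstop Qs Qh ρs ρh hρsnn hρssum hρs0 hρhnn hρhsum hρh0
    hsim1 hsim2
end
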